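/- arXiv:1208.2385 — 3 statements merged into one kernel-verified Lean document; each statement's English description precedes it below -/
import Mathlib

section
/- Let f, g ∈ ℂ[z] be polynomials, not both zero, and let n = max(deg f, deg g). Then the dimension of the kernel of the 2n×2n resultant matrix R = [[T_f, Z·H_f],[T_g, Z·H_g]] (as a linear map ℂ^{2n} → ℂ^{2n}) equals the degree of gcd(f, g). -/
open Polynomial Matrix

/-- The `n × n` Hankel matrix of a polynomial `f`: `(H_f)_{jk} = f_{j+k+1}`. -/
noncomputable def Hk (n : ℕ) (f : ℂ[X]) : Matrix (Fin n) (Fin n) ℂ :=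
  Matrix.of fun j k => f.coeff ((j : ℕ) + (k : ℕ) + 1)

/-- The `n × n` upper triangular Toeplitz matrix of a polynomial `f`:
`(T_f)_{jk} = f_{k-j}` if `k ≥ j`, and `0` otherwise. -/
noncomputable def Tp (n : ℕ) (f : ℂ[X]) : Matrix (Fin n) (Fin n) ℂ :=
  Matrix.of fun j k => if (j : ℕ) ≤ (k : ℕ) then f.coeff ((k : ℕ) - (j : ℕ)) else 0

/-- The `n × n` reverse identity matrix `Z`. -/
noncomputable def Rv (n : ℕ) : Matrix (Fin n) (Fin n) ℂ :=
  Matrix.of fun j k => if (j : ℕ) + (k : ℕ) = n - 1 then 1 else 0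

/-- The `n × n` Bezoutian matrix of `f` and `g`: `B = H_f T_g - H_g T_f`. -/
noncomputable def Bz (n : ℕ) (f g : ℂ[X]) : Matrix (Fin n) (Fin n) ℂ :=
  Hk n f * Tp n g - Hk n g * Tp n f

/-- The `2n × 2n` resultant matrix of `f` and `g`:
`R = [[T_f, Z H_f], [T_g, Z H_g]]`. -/
noncomputable def Rs (n : ℕ) (f g : ℂ[X]) : Matrix (Fin n ⊕ Fin n) (Fin n ⊕ Fin n) ℂ :=
  Matrix.fromBlocks (Tp n f) (Rv n * Hk n f) (Tp n g) (Rv n * Hk n g)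

/-!
Read `w = (u, v) ∈ ℂ^{2n}` as the polynomial `W = ∑ u_k X^(2n-1-k) + ∑ v_k X^(n-1-k)` of degree
`< 2n`. The rows of `R w` are the coefficients of `f W` and `g W` in degrees `[n, 2n)`, so `R w = 0`
says that `f W` and `g W` are congruent modulo `X^(2n)` to polynomials of degree `< n`.

Write `f = d f₁`, `g = d g₁` with `d = gcd f g` and `f₁, g₁` coprime. If `f₁ E ≡ a₁` and
`g₁ E ≡ a₂` with `E = d W`, then `g₁ a₁ ≡ f₁ a₂` modulo `X^(2n)`, and degrees force equality, so
`a₁ = f₁ a`, `a₂ = g₁ a` for a single `a` of degree `< deg d`, and Bezout gives `E ≡ a`. Hence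
`R w = 0` iff the coefficients of `d W` in degrees `[deg d, 2n)` vanish. These `2n - deg d` linear
conditions on `W` are independent (triangular, with the leading coefficient of `d` on the diagonal),
leaving a kernel of dimension `deg d`.
-/

namespace Polynomial

section CommRing

variable {R : Type*} [CommRing R]

def DegreeLTModXPow (m N : ℕ) (p : R[X]) : Prop :=
  ∃ a ∈ degreeLT R m, X ^ N ∣ p - a

theorem degreeLTModXPow_iff_coeff {m N : ℕ} {p : R[X]} :
    DegreeLTModXPow m N p ↔ ∀ i, m ≤ i → i < N → p.coeff i = 0 := by
  constructor
  · rintro ⟨a, ha, hdvd⟩ i hmi hiN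
    have hai : a.coeff i = 0 :=
      coeff_eq_zero_of_degree_lt ((mem_degreeLT.mp ha).trans_le (by exact_mod_cast hmi))
    simpa [hai] using X_pow_dvd_iff.mp hdvd i hiN
  · intro hp
    refine ⟨PowerSeries.trunc m (p : PowerSeries R),
      mem_degreeLT.mpr (PowerSeries.degree_trunc_lt _ _), X_pow_dvd_iff.mpr fun i hi => ?_⟩
    rw [coeff_sub, PowerSeries.coeff_trunc, Polynomial.coeff_coe]
    split_ifs with him
    · exact sub_self _
    · rw [hp i (not_lt.mp him) hi, sub_zero]

theorem mul_mem_degreeLT {p q : R[X]} {m k : ℕ} (hp : p.natDegree ≤ m) (hq : q ∈ degreeLT R k) :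
    p * q ∈ degreeLT R (m + k) := by
  rcases eq_or_ne (p * q) 0 with hpq | hpq
  · rw [hpq]
    exact zero_mem _
  have hq0 : q ≠ 0 := right_ne_zero_of_mul hpq
  rw [mem_degreeLT, ← natDegree_lt_iff_degree_lt hq0] at hq
  rw [mem_degreeLT, ← natDegree_lt_iff_degree_lt hpq]
  exact natDegree_mul_le.trans_lt (by omega)

end CommRing

section IsDomain

variable {R : Type*} [CommRing R] [IsDomain R]

theorem max_natDegree_mul_left {d p q : R[X]} (hd : d ≠ 0) (hpq : p ≠ 0 ∨ q ≠ 0) :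
    max (d * p).natDegree (d * q).natDegree = d.natDegree + max p.natDegree q.natDegree := by
  rcases eq_or_ne p 0 with rfl | hp <;> rcases eq_or_ne q 0 with rfl | hq
  · tauto
  · simp [natDegree_mul hd hq]
  · simp [natDegree_mul hd hp]
  · simp [natDegree_mul hd hp, natDegree_mul hd hq, Nat.add_max_add_left]

theorem mem_degreeLT_of_mul_mem {p q : R[X]} {k : ℕ} (hp : p ≠ 0)
    (h : p * q ∈ degreeLT R (p.natDegree + k)) : q ∈ degreeLT R k := by
  rcases eq_or_ne q 0 with rfl | hq
  · exact zero_mem _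
  rw [mem_degreeLT, ← natDegree_lt_iff_degree_lt (mul_ne_zero hp hq), natDegree_mul hp hq] at h
  rw [mem_degreeLT, ← natDegree_lt_iff_degree_lt hq]
  omega

theorem mem_degreeLT_of_mul_mem_of_isCoprime {f g a : R[X]} {k n : ℕ} (hfg : IsCoprime f g)
    (hn : k + max f.natDegree g.natDegree = n) (hf : f * a ∈ degreeLT R n)
    (hg : g * a ∈ degreeLT R n) : a ∈ degreeLT R k := by
  obtain ⟨h, hh0, hdeg, hmem⟩ :
      ∃ h : R[X], h ≠ 0 ∧ h.natDegree = max f.natDegree g.natDegree ∧ h * a ∈ degreeLT R n := by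
    rcases eq_or_ne f 0 with rfl | hf0
    · have hg1 := isCoprime_zero_left.mp hfg
      exact ⟨g, hg1.ne_zero, by simp [natDegree_eq_zero_of_isUnit hg1], hg⟩
    rcases eq_or_ne g 0 with rfl | hg0
    · have hf1 := isCoprime_zero_right.mp hfg
      exact ⟨f, hf1.ne_zero, by simp [natDegree_eq_zero_of_isUnit hf1], hf⟩
    rcases max_choice f.natDegree g.natDegree with hmax | hmax
    · exact ⟨f, hf0, hmax.symm, hf⟩
    · exact ⟨g, hg0, hmax.symm, hg⟩
  refine mem_degreeLT_of_mul_mem hh0 ?_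
  rwa [hdeg, add_comm, hn]

theorem degreeLTModXPow_mul_and_mul_iff {f g E : R[X]} {k n N : ℕ} (hfg : IsCoprime f g)
    (hn : k + max f.natDegree g.natDegree = n) (hN : n + max f.natDegree g.natDegree ≤ N) :
    DegreeLTModXPow n N (f * E) ∧ DegreeLTModXPow n N (g * E) ↔ DegreeLTModXPow k N E := by
  obtain ⟨u, v, huv⟩ := hfg
  constructor
  · rintro ⟨⟨a₁, ha₁, hfE⟩, ⟨a₂, ha₂, hgE⟩⟩
    have hcross : g * a₁ = f * a₂ := by
      rw [← sub_eq_zero]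
      refine eq_zero_of_dvd_of_degree_lt (p := X ^ N) ?_ ?_
      · have : g * a₁ - f * a₂ = f * (g * E - a₂) - g * (f * E - a₁) := by ring
        rw [this]
        exact dvd_sub (dvd_mul_of_dvd_right hgE _) (dvd_mul_of_dvd_right hfE _)
      · rw [degree_X_pow, ← mem_degreeLT]
        exact degreeLT_mono (by omega) (sub_mem (mul_mem_degreeLT (le_max_right _ _) ha₁)
          (mul_mem_degreeLT (le_max_left _ _) ha₂))
    have hfa : f * (u * a₁ + v * a₂) = a₁ := by linear_combination (-v) * hcross + a₁ * huv
    have hga : g * (u * a₁ + v * a₂) = a₂ := by linear_combination u * hcross + a₂ * huv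
    refine ⟨u * a₁ + v * a₂, mem_degreeLT_of_mul_mem_of_isCoprime ⟨u, v, huv⟩ hn
      (hfa.symm ▸ ha₁) (hga.symm ▸ ha₂), ?_⟩
    have : E - (u * a₁ + v * a₂) = u * (f * E - a₁) + v * (g * E - a₂) := by
      linear_combination (-E) * huv
    rw [this]
    exact dvd_add (dvd_mul_of_dvd_right hfE _) (dvd_mul_of_dvd_right hgE _)
  · rintro ⟨a, ha, hE⟩
    have hlow {h : R[X]} (hh : h.natDegree ≤ max f.natDegree g.natDegree) :
        h * a ∈ degreeLT R n :=
      degreeLT_mono (by omega) (mul_mem_degreeLT hh ha)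
    refine ⟨⟨f * a, hlow (le_max_left _ _), ?_⟩, ⟨g * a, hlow (le_max_right _ _), ?_⟩⟩ <;>
      rw [← mul_sub] <;> exact dvd_mul_of_dvd_right hE _

end IsDomain

section Field

variable {K : Type*} [Field K]

theorem finrank_degreeLT (N : ℕ) : Module.finrank K (degreeLT K N) = N := by
  simp [Module.finrank_eq_card_basis (degreeLT.basis K N)]

noncomputable def coeffsMulWindow (d : K[X]) (N : ℕ) :
    degreeLT K N →ₗ[K] Fin (N - d.natDegree) → K :=
  LinearMap.pi fun i => (lcoeff K (d.natDegree + i)).comp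
    ((LinearMap.mulLeft K d).comp (degreeLT K N).subtype)

theorem coeffsMulWindow_apply (d : K[X]) (N : ℕ) (W : degreeLT K N) (i : Fin (N - d.natDegree)) :
    coeffsMulWindow d N W i = (d * W).coeff (d.natDegree + i) :=
  rfl

theorem mem_ker_coeffsMulWindow_iff {d : K[X]} {N : ℕ} {W : degreeLT K N} :
    W ∈ LinearMap.ker (coeffsMulWindow d N) ↔ DegreeLTModXPow d.natDegree N (d * (W : K[X])) := by
  rw [degreeLTModXPow_iff_coeff, LinearMap.mem_ker, funext_iff]
  constructor
  · intro h i h1 h2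
    simpa [coeffsMulWindow_apply, Nat.add_sub_cancel' h1] using h ⟨i - d.natDegree, by omega⟩
  · intro h i
    exact h _ (by omega) (by omega)

theorem coeffsMulWindow_surjective {d : K[X]} (hd : d ≠ 0) (N : ℕ) :
    Function.Surjective (coeffsMulWindow d N) := by
  let ι := Submodule.inclusion (degreeLT_mono (R := K) (Nat.sub_le N d.natDegree))
  have hinj : Function.Injective ((coeffsMulWindow d N).comp ι) := by
    rw [← LinearMap.ker_eq_bot, Submodule.eq_bot_iff]
    intro W hW
    by_contra hW0
    have hW0' : (W : K[X]) ≠ 0 := by simpa using hW0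
    have hdeg : (W : K[X]).natDegree < N - d.natDegree :=
      (natDegree_lt_iff_degree_lt hW0').mpr (mem_degreeLT.mp W.2)
    have hcoeff := congr_fun (LinearMap.mem_ker.mp hW) ⟨_, hdeg⟩
    rw [LinearMap.comp_apply, coeffsMulWindow_apply] at hcoeff
    exact mul_ne_zero (leadingCoeff_ne_zero.mpr hd) (leadingCoeff_ne_zero.mpr hW0')
      (by simpa [ι, coeff_mul_degree_add_degree] using hcoeff)
  intro y
  obtain ⟨W, hW⟩ := (LinearMap.injective_iff_surjective_of_finrank_eq_finrank
    (by simp [finrank_degreeLT])).mp hinj y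
  exact ⟨ι W, hW⟩

theorem finrank_ker_coeffsMulWindow {d : K[X]} (hd : d ≠ 0) {N : ℕ} (h : d.natDegree ≤ N) :
    Module.finrank K (LinearMap.ker (coeffsMulWindow d N)) = d.natDegree := by
  have := LinearMap.finrank_range_add_finrank_ker (coeffsMulWindow d N)
  rw [LinearMap.range_eq_top.mpr (coeffsMulWindow_surjective hd N), finrank_top,
    Module.finrank_fin_fun, finrank_degreeLT] at this
  omega

end Field

end Polynomial

theorem EuclideanDomain.isCoprime_of_eq_gcd_mul {R : Type*} [EuclideanDomain R] [DecidableEq R]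
    {f g f₁ g₁ : R} (hd : EuclideanDomain.gcd f g ≠ 0) (hf : f = EuclideanDomain.gcd f g * f₁)
    (hg : g = EuclideanDomain.gcd f g * g₁) : IsCoprime f₁ g₁ := by
  refine ⟨EuclideanDomain.gcdA f g, EuclideanDomain.gcdB f g, mul_left_cancel₀ hd ?_⟩
  linear_combination (-EuclideanDomain.gcdA f g) * hf - EuclideanDomain.gcdB f g * hg
    - EuclideanDomain.gcd_eq_gcd_ab f g

section Resultant

variable (n : ℕ) (f g : ℂ[X])

def resultantIndex : Fin n ⊕ Fin n ≃ Fin (n + n) :=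
  finSumFinEquiv.trans Fin.revPerm

@[simp] theorem resultantIndex_inl (k : Fin n) :
    (resultantIndex n (Sum.inl k) : ℕ) = n + n - 1 - k := by
  simp only [resultantIndex, Equiv.trans_apply, finSumFinEquiv_apply_left, Fin.revPerm_apply,
    Fin.val_rev, Fin.val_castAdd]
  omega

@[simp] theorem resultantIndex_inr (k : Fin n) :
    (resultantIndex n (Sum.inr k) : ℕ) = n - 1 - k := by
  simp only [resultantIndex, Equiv.trans_apply, finSumFinEquiv_apply_right, Fin.natAdd_eq_addNat,
    Fin.revPerm_apply, Fin.val_rev, Fin.val_addNat]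
  omega

noncomputable def resultantVecEquiv : (Fin n ⊕ Fin n → ℂ) ≃ₗ[ℂ] degreeLT ℂ (n + n) :=
  (LinearEquiv.funCongrLeft ℂ ℂ (resultantIndex n).symm).trans (degreeLTEquiv ℂ (n + n)).symm

theorem coe_resultantVecEquiv (w : Fin n ⊕ Fin n → ℂ) :
    (resultantVecEquiv n w : ℂ[X]) = ∑ s, C (w s) * X ^ (resultantIndex n s : ℕ) := by
  change ∑ i : Fin (n + n), monomial (i : ℕ) (w ((resultantIndex n).symm i)) = _
  rw [← (resultantIndex n).sum_comp]
  simp [C_mul_X_pow_eq_monomial]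

theorem coeff_mul_resultantVecEquiv (p : ℂ[X]) (w : Fin n ⊕ Fin n → ℂ) (m : ℕ) :
    (p * (resultantVecEquiv n w : ℂ[X])).coeff m =
      ∑ s, (p * X ^ (resultantIndex n s : ℕ)).coeff m * w s := by
  rw [coe_resultantVecEquiv, Finset.mul_sum, finsetSum_coeff]
  refine Finset.sum_congr rfl fun s _ => ?_
  rw [mul_left_comm, coeff_C_mul, mul_comm]

theorem Tp_apply_eq_coeff (j k : Fin n) :
    Tp n f j k = (f * X ^ (n + n - 1 - k)).coeff (n + n - 1 - j) := by
  rw [Tp, of_apply, coeff_mul_X_pow']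
  by_cases hjk : (j : ℕ) ≤ k
  · rw [if_pos hjk, if_pos (by omega)]
    congr 1
    omega
  · rw [if_neg hjk, if_neg (by omega)]

theorem Rv_mul_Hk_apply_eq_coeff (j k : Fin n) :
    (Rv n * Hk n f) j k = (f * X ^ (n - 1 - k)).coeff (n + n - 1 - j) := by
  have hRv : ∀ l, Rv n j l = if l = j.rev then 1 else 0 := by
    intro l
    simp only [Rv, of_apply, Fin.ext_iff, Fin.val_rev]
    have := j.isLt
    have := l.isLt
    exact if_congr (by omega) rfl rfl
  simp only [mul_apply, hRv, ite_mul, one_mul, zero_mul, Finset.sum_ite_eq', Finset.mem_univ,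
    if_true, Hk, of_apply, Fin.val_rev, coeff_mul_X_pow']
  rw [if_pos (by omega)]
  congr 1
  omega

theorem Rs_mulVec_inl (w : Fin n ⊕ Fin n → ℂ) (j : Fin n) :
    (Rs n f g *ᵥ w) (Sum.inl j) = (f * (resultantVecEquiv n w : ℂ[X])).coeff (n + n - 1 - j) := by
  simp [coeff_mul_resultantVecEquiv, mulVec, dotProduct, Fintype.sum_sum_type, Rs,
    Tp_apply_eq_coeff, Rv_mul_Hk_apply_eq_coeff]

theorem Rs_mulVec_inr (w : Fin n ⊕ Fin n → ℂ) (j : Fin n) :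
    (Rs n f g *ᵥ w) (Sum.inr j) = (g * (resultantVecEquiv n w : ℂ[X])).coeff (n + n - 1 - j) := by
  simp [coeff_mul_resultantVecEquiv, mulVec, dotProduct, Fintype.sum_sum_type, Rs,
    Tp_apply_eq_coeff, Rv_mul_Hk_apply_eq_coeff]

theorem mem_ker_toLin'_Rs_iff (w : Fin n ⊕ Fin n → ℂ) :
    w ∈ LinearMap.ker (toLin' (Rs n f g)) ↔
      DegreeLTModXPow n (n + n) (f * (resultantVecEquiv n w : ℂ[X])) ∧
        DegreeLTModXPow n (n + n) (g * (resultantVecEquiv n w : ℂ[X])) := by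
  have hrows (p : ℂ[X]) :
      (∀ j : Fin n, p.coeff (n + n - 1 - j) = 0) ↔ DegreeLTModXPow n (n + n) p := by
    rw [degreeLTModXPow_iff_coeff]
    constructor
    · intro h i h1 h2
      simpa [show n + n - 1 - (n + n - 1 - i) = i by omega] using h ⟨n + n - 1 - i, by omega⟩
    · intro h j
      exact h _ (by omega) (by omega)
  rw [LinearMap.mem_ker, toLin'_apply, funext_iff, Sum.forall, ← hrows, ← hrows]
  simp only [Pi.zero_apply, Rs_mulVec_inl, Rs_mulVec_inr]

end Resultant

/-- The nullity of the resultant matrix of `f` and `g` (of size `2n`, where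
`n = max(deg f, deg g)`) equals the degree of `gcd(f, g)`. -/
theorem resultant_nullity (f g : ℂ[X]) (hfg : f ≠ 0 ∨ g ≠ 0)
    (n : ℕ) (hn : n = max f.natDegree g.natDegree) :
    Module.finrank ℂ (LinearMap.ker (Matrix.toLin' (Rs n f g))) =
      (EuclideanDomain.gcd f g).natDegree := by
  set d := EuclideanDomain.gcd f g
  have hd : d ≠ 0 := by
    rw [Ne, EuclideanDomain.gcd_eq_zero_iff]
    tauto
  obtain ⟨f₁, hf⟩ : d ∣ f := EuclideanDomain.gcd_dvd_left f g
  obtain ⟨g₁, hg⟩ : d ∣ g := EuclideanDomain.gcd_dvd_right f g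
  have hdeg : d.natDegree + max f₁.natDegree g₁.natDegree = n := by
    rw [hn, hf, hg, max_natDegree_mul_left hd]
    rcases hfg with h | h
    · exact .inl (right_ne_zero_of_mul (hf ▸ h))
    · exact .inr (right_ne_zero_of_mul (hg ▸ h))
  have hker : LinearMap.ker (toLin' (Rs n f g)) =
      (LinearMap.ker (coeffsMulWindow d (n + n))).comap (resultantVecEquiv n).toLinearMap := by
    ext w
    rw [mem_ker_toLin'_Rs_iff, Submodule.mem_comap, mem_ker_coeffsMulWindow_iff, hf, hg,
      mul_comm d f₁, mul_comm d g₁, mul_assoc, mul_assoc]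
    exact degreeLTModXPow_mul_and_mul_iff (EuclideanDomain.isCoprime_of_eq_gcd_mul hd hf hg)
      hdeg (by omega)
  rw [hker, Submodule.comap_equiv_eq_map_symm, LinearEquiv.finrank_map_eq,
    finrank_ker_coeffsMulWindow hd (by omega)]
end

section
/- Let f, g ∈ ℂ[z] with deg f ≤ n and deg g ≤ n, let B = H_f·T_g − H_g·T_f be the n×n Bezoutian matrix and R = [[T_f, Z·H_f],[T_g, Z·H_g]] the 2n×2n resultant matrix. Then Rᵀ · [[0, Z],[−Z, 0]] · R = [[0, −B],[B, 0]], where both 2×2 block matrices have n×n blocks. -/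
/-!
Every block of `Rᵀ [[0, Z], [-Z, 0]] R` is a difference `X(f, g) - X(g, f)`. In the diagonal
blocks `X(f, g)` is `T_fᵀ Z T_g` resp. `H_f Z H_g`, whose `(j, k)` entries are the single
coefficients `(fg)_{j+k+1-n}` (zero when `j + k + 1 < n`) resp., once `deg f, deg g ≤ n`,
`(fg)_{n+j+k+1}`; so they are symmetric in `f, g` and the diagonal blocks vanish. In the
off-diagonal blocks, `T_fᵀ H_g + H_f T_g` has entries `(fg)_{j+k+1}`, so `T_fᵀ H_g - T_gᵀ H_f`
equals `H_g T_f - H_f T_g = -B`.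
-/

open Polynomial Matrix

theorem Polynomial.sum_coeff_mul_coeff_eq_coeff_mul {R ι : Type*} [Semiring R] {f g : R[X]}
    {m : ℕ} (s : Finset ι) (p q : ι → ℕ) (h_add : ∀ a ∈ s, p a + q a = m)
    (h_inj : Set.InjOn p s)
    (h_surj : ∀ i l, i + l = m → f.coeff i * g.coeff l ≠ 0 → ∃ a ∈ s, p a = i) :
    ∑ a ∈ s, f.coeff (p a) * g.coeff (q a) = (f * g).coeff m := by
  rw [coeff_mul]
  refine Finset.sum_bij_ne_zero (fun a _ _ => (p a, q a)) (fun a ha _ => ?_)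
    (fun a ha _ b hb _ h => h_inj ha hb (Prod.ext_iff.1 h).1) ?_ (fun _ _ _ => rfl)
  · exact Finset.HasAntidiagonal.mem_antidiagonal.2 (h_add a ha)
  · rintro ⟨i, l⟩ hil hne
    have hil : i + l = m := Finset.HasAntidiagonal.mem_antidiagonal.1 hil
    obtain ⟨a, ha, rfl⟩ := h_surj i l hil hne
    have hq : q a = l := by have := h_add a ha; omega
    exact ⟨a, ha, by rwa [hq], by rw [hq]⟩

theorem Rv_apply {n : ℕ} (j k : Fin n) : Rv n j k = if k = j.rev then 1 else 0 := by
  simp only [Rv, Matrix.of_apply, Fin.ext_iff, Fin.val_rev]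
  congr 1
  grind

theorem Rv_mul_apply {n : ℕ} {α : Type*} (M : Matrix (Fin n) α ℂ) (j : Fin n) (k : α) :
    (Rv n * M) j k = M j.rev k := by
  simp [Matrix.mul_apply, Rv_apply]

theorem Rv_mul_Rv (n : ℕ) : Rv n * Rv n = 1 := by
  ext j k
  simp [Rv_mul_apply, Rv_apply, Matrix.one_apply, eq_comm]

theorem transpose_Rv (n : ℕ) : (Rv n)ᵀ = Rv n := by
  ext j k
  simp only [Matrix.transpose_apply, Rv, Matrix.of_apply, Nat.add_comm (k : ℕ)]

theorem transpose_Hk (n : ℕ) (f : ℂ[X]) : (Hk n f)ᵀ = Hk n f := by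
  ext j k
  simp only [Matrix.transpose_apply, Hk, Matrix.of_apply, Nat.add_comm (k : ℕ)]

theorem transpose_Tp_mul_Rv_mul_Tp (n : ℕ) (f g : ℂ[X]) :
    (Tp n f)ᵀ * (Rv n * Tp n g) = Matrix.of fun j k : Fin n =>
      if n ≤ (j : ℕ) + k + 1 then (f * g).coeff (j + k + 1 - n) else 0 := by
  ext j k
  rw [Matrix.mul_apply]
  simp only [Rv_mul_apply, Matrix.transpose_apply, Tp, Matrix.of_apply, Fin.val_rev,
    ite_zero_mul_ite_zero]
  rw [← Finset.sum_filter]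
  split_ifs with h
  · refine Polynomial.sum_coeff_mul_coeff_eq_coeff_mul _ _ _ ?_ ?_ ?_
    · intro a ha
      simp only [Finset.mem_filter] at ha
      omega
    · intro a ha b hb hab
      rw [Finset.mem_coe, Finset.mem_filter] at ha hb
      dsimp only at hab
      exact Fin.ext (by omega)
    · intro i l hil _
      refine ⟨⟨j - i, by omega⟩, ?_, ?_⟩
      · simp only [Finset.mem_filter, Finset.mem_univ, true_and]
        omega
      · dsimp only
        omega
  · refine Finset.sum_eq_zero fun a ha => ?_
    simp only [Finset.mem_filter] at ha
    omega

theorem transpose_Tp_mul_Hk_add_Hk_mul_Tp (n : ℕ) (f g : ℂ[X]) :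
    (Tp n f)ᵀ * Hk n g + Hk n f * Tp n g =
      Matrix.of fun j k : Fin n => (f * g).coeff (j + k + 1) := by
  ext j k
  simp only [Matrix.add_apply, Matrix.mul_apply, Matrix.transpose_apply, Tp, Hk, Matrix.of_apply,
    ite_mul, mul_ite, zero_mul, mul_zero]
  rw [← Finset.sum_filter, ← Finset.sum_filter]
  -- The first sum runs over the terms `f_i g_l` of `(fg)_{j+k+1}` with `i ≤ j`, the second over
  -- those with `i > j`.
  have h_split := Polynomial.sum_coeff_mul_coeff_eq_coeff_mul (f := f) (g := g) (m := j + k + 1)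
    ((Finset.univ.filter fun a : Fin n => (a : ℕ) ≤ j).disjSum
      (Finset.univ.filter fun a : Fin n => (a : ℕ) ≤ k))
    (Sum.elim (fun a => j - a) (fun a => j + a + 1))
    (Sum.elim (fun a => a + k + 1) (fun a => k - a)) ?_ ?_ ?_
  · rwa [Finset.sum_disjSum] at h_split
  · rintro (a | a) ha <;>
      simp only [Finset.inl_mem_disjSum, Finset.inr_mem_disjSum, Finset.mem_filter,
        Finset.mem_univ, true_and, Sum.elim_inl, Sum.elim_inr] at ha ⊢ <;> omega
  · rintro (a | a) ha (b | b) hb hab <;>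
      simp only [Finset.mem_coe, Finset.inl_mem_disjSum, Finset.inr_mem_disjSum,
        Finset.mem_filter, Finset.mem_univ, true_and, Sum.elim_inl, Sum.elim_inr, Sum.inl.injEq,
        Sum.inr.injEq, reduceCtorEq, Fin.ext_iff] at ha hb hab ⊢ <;> omega
  · intro i l hil _
    by_cases hi : i ≤ j
    · refine ⟨.inl ⟨j - i, by omega⟩, ?_, ?_⟩ <;>
        simp only [Finset.inl_mem_disjSum, Finset.mem_filter, Finset.mem_univ, true_and,
          Sum.elim_inl] <;> omega
    · refine ⟨.inr ⟨i - j - 1, by omega⟩, ?_, ?_⟩ <;>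
        simp only [Finset.inr_mem_disjSum, Finset.mem_filter, Finset.mem_univ, true_and,
          Sum.elim_inr] <;> omega

theorem Hk_mul_Rv_mul_Hk (n : ℕ) {f g : ℂ[X]} (hf : f.natDegree ≤ n)
    (hg : g.natDegree ≤ n) :
    Hk n f * (Rv n * Hk n g) =
      Matrix.of fun j k : Fin n => (f * g).coeff (n + j + k + 1) := by
  ext j k
  rw [Matrix.mul_apply]
  simp only [Rv_mul_apply, Hk, Matrix.of_apply, Fin.val_rev]
  refine Polynomial.sum_coeff_mul_coeff_eq_coeff_mul _ _ _ (fun a _ => by omega)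
    (fun a _ b _ hab => Fin.ext (by omega)) fun i l hil hne => ?_
  have hi : j < i := by
    by_contra!
    exact hne (by rw [coeff_eq_zero_of_natDegree_lt (by omega : g.natDegree < l), mul_zero])
  have hi' : i ≤ j + n := by
    by_contra!
    exact hne (by rw [coeff_eq_zero_of_natDegree_lt (by omega : f.natDegree < i), zero_mul])
  exact ⟨⟨i - j - 1, by omega⟩, Finset.mem_univ _, by simp only; omega⟩

/-- The fundamental relation between resultant and Bezoutian:
`Rᵀ [[0, Z], [-Z, 0]] R = [[0, -B], [B, 0]]`. -/
theorem resultant_bezoutian_relation (f g : ℂ[X]) (n : ℕ)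
    (hf : f.natDegree ≤ n) (hg : g.natDegree ≤ n) :
    (Rs n f g)ᵀ * Matrix.fromBlocks 0 (Rv n) (-(Rv n)) 0 * Rs n f g =
      Matrix.fromBlocks 0 (-(Bz n f g)) (Bz n f g) 0 := by
  have h_toeplitz : (Tp n g)ᵀ * (Rv n * Tp n f) = (Tp n f)ᵀ * (Rv n * Tp n g) := by
    rw [transpose_Tp_mul_Rv_mul_Tp, transpose_Tp_mul_Rv_mul_Tp, mul_comm]
  have h_mixed :
      (Tp n g)ᵀ * Hk n f + Hk n g * Tp n f = (Tp n f)ᵀ * Hk n g + Hk n f * Tp n g := by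
    rw [transpose_Tp_mul_Hk_add_Hk_mul_Tp, transpose_Tp_mul_Hk_add_Hk_mul_Tp, mul_comm]
  have h_hankel : Hk n g * (Rv n * Hk n f) = Hk n f * (Rv n * Hk n g) := by
    rw [Hk_mul_Rv_mul_Hk n hg hf, Hk_mul_Rv_mul_Hk n hf hg, mul_comm]
  rw [Rs, Matrix.fromBlocks_transpose, Matrix.fromBlocks_multiply, Matrix.fromBlocks_multiply]
  simp only [Matrix.transpose_mul, transpose_Hk, transpose_Rv, Matrix.mul_zero, Matrix.mul_neg,
    Matrix.neg_mul, add_zero, zero_add, Matrix.mul_assoc, ← Matrix.mul_assoc (Rv n) (Rv n),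
    Rv_mul_Rv, Matrix.one_mul, Matrix.mul_one]
  rw [Matrix.fromBlocks_inj, Bz]
  refine ⟨by rw [h_toeplitz, neg_add_cancel], ?_, by rw [neg_add_eq_sub],
    by rw [h_hankel, neg_add_cancel]⟩
  rw [neg_sub, neg_add_eq_sub, sub_eq_sub_iff_add_eq_add, ← h_mixed, add_comm]
end

section
/- Let f, g ∈ ℂ[z] be polynomials, not both zero, let m = max(deg f, deg g), and let n ≥ m. Then the dimension of the kernel of the 2n×2n resultant matrix R_{2n} = [[T_f, Z·H_f],[T_g, Z·H_g]] (built from the n×n Hankel, Toeplitz and reverse-identity matrices) equals n − m + deg gcd(f, g). -/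
open Polynomial Matrix

/-!
Read `v = (a, b)` as the polynomial `P = ∑ aₖ X^(2n-1-k) + ∑ bₖ X^(n-1-k)` of degree `< 2n`;
then the rows of `R_{2n} v` are the coefficients of `f P` and of `g P` in degrees `n, …, 2n - 1`.
Write `f = h f₁`, `g = h g₁` with `h = gcd f g` and `k = max (deg f₁) (deg g₁) = m - deg h`.
As `f₁` and `g₁` are coprime, splitting `f P` and `g P` at `X^(2n)` and combining the pieces
with a Bezout identity shows that those coefficients vanish exactly when the coefficients of
`h P` in degrees `n - k, …, 2n - 1` do. These `n + k` conditions on `P` are independent, since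
`P = C / h` realises any prescribed values `C` in those degrees (the remainder `C % h` has
degree `< deg h ≤ n - k`), so the kernel has dimension `2n - (n + k) = n - m + deg h`.
-/

namespace Polynomial

section Semiring

variable {R : Type*} [Semiring R] {a b c : ℕ}

theorem coeff_mul_sum_monomial {ι : Type*} (s : Finset ι) (p : R[X]) (e : ι → ℕ) (c : ι → R)
    (r : ℕ) :
    (p * ∑ t ∈ s, monomial (e t) (c t)).coeff r = ∑ t ∈ s, (p * X ^ e t).coeff r * c t := by
  simp only [Finset.mul_sum, finsetSum_coeff, ← C_mul_X_pow_eq_monomial, ← mul_assoc]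
  exact Finset.sum_congr rfl fun t _ => by rw [mul_assoc, ← X_pow_mul, ← mul_assoc, coeff_mul_C]

theorem coeff_add_X_pow_mul_eq_zero {L : R[X]} (hL : L.degree < a) (H : R[X]) :
    ∀ r ∈ Set.Ico a b, (L + X ^ b * H).coeff r = 0 := by
  rintro r ⟨har, hrb⟩
  rw [coeff_add, coeff_X_pow_mul', if_neg (not_le.mpr hrb), add_zero,
    coeff_eq_zero_of_degree_lt (hL.trans_le (by exact_mod_cast har))]

theorem degree_mul_lt_of_degree_lt {p L : R[X]} (hL : L.degree < a)
    (hp : p.natDegree + a ≤ c) : (p * L).degree < c := by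
  rcases eq_or_ne L 0 with rfl | hL0
  · simp
  have hLa := (natDegree_lt_iff_degree_lt hL0).mpr hL
  calc (p * L).degree ≤ p.degree + L.degree := degree_mul_le _ _
    _ ≤ p.natDegree + L.natDegree := add_le_add degree_le_natDegree degree_le_natDegree
    _ < c := by exact_mod_cast (by omega : p.natDegree + L.natDegree < c)

end Semiring

section CommRing

variable {R : Type*} [CommRing R] {a b c : ℕ}

theorem exists_eq_add_X_pow_mul_of_coeff_eq_zero [Nontrivial R] {p : R[X]}
    (hp : ∀ r ∈ Set.Ico a b, p.coeff r = 0) :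
    ∃ L H : R[X], L.degree < a ∧ p = L + X ^ b * H := by
  have hdiv := (modByMonic_add_div p (X ^ b)).symm
  refine ⟨p %ₘ X ^ b, p /ₘ X ^ b, (degree_lt_iff_coeff_zero _ _).mpr fun r hr => ?_, hdiv⟩
  rcases lt_or_ge r b with hrb | hrb
  · have hcoeff := congrArg (coeff · r) hdiv
    rw [coeff_add, coeff_X_pow_mul', if_neg (not_le.mpr hrb), add_zero] at hcoeff
    rw [← hcoeff, hp r ⟨by exact_mod_cast hr, hrb⟩]
  · refine coeff_eq_zero_of_degree_lt ((degree_modByMonic_lt _ (monic_X_pow b)).trans_le ?_)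
    exact (degree_X_pow_le b).trans (by exact_mod_cast hrb : (b : WithBot ℕ) ≤ r)

theorem coeff_mul_eq_zero_of_coeff_eq_zero [Nontrivial R] {p Q : R[X]}
    (hp : p.natDegree + c ≤ a) (hQ : ∀ r ∈ Set.Ico c b, Q.coeff r = 0) :
    ∀ r ∈ Set.Ico a b, (p * Q).coeff r = 0 := by
  obtain ⟨L, H, hL, rfl⟩ := exists_eq_add_X_pow_mul_of_coeff_eq_zero hQ
  rw [show p * (L + X ^ b * H) = p * L + X ^ b * (p * H) by ring]
  exact coeff_add_X_pow_mul_eq_zero (degree_mul_lt_of_degree_lt hL hp) _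

noncomputable def mulCoeffWindow (h : R[X]) (w k : ℕ) : R[X] →ₗ[R] Fin k → R :=
  LinearMap.pi fun i => lcoeff R (w + i) ∘ₗ LinearMap.mulLeft R h

theorem mulCoeffWindow_eq_zero_iff {h P : R[X]} {w b : ℕ} :
    mulCoeffWindow h w (b - w) P = 0 ↔ ∀ r ∈ Set.Ico w b, (h * P).coeff r = 0 := by
  simp only [mulCoeffWindow, funext_iff, LinearMap.pi_apply, LinearMap.comp_apply,
    LinearMap.mulLeft_apply, lcoeff_apply, Pi.zero_apply]
  refine ⟨fun H r ⟨hwr, hrb⟩ => ?_, fun H i => H _ ⟨by omega, by omega⟩⟩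
  simpa [Nat.add_sub_cancel' hwr] using H ⟨r - w, by omega⟩

end CommRing

section IsDomain

variable {R : Type*} [CommRing R] [IsDomain R] {a b : ℕ}

theorem natDegree_add_lt_of_degree_mul_lt {p S : R[X]} (hp : p ≠ 0) (hS : S ≠ 0)
    (h : (p * S).degree < a) : p.natDegree + S.natDegree < a := by
  rwa [← natDegree_mul hp hS, natDegree_lt_iff_degree_lt (mul_ne_zero hp hS)]

theorem max_natDegree_mul_left_s15 {h f g : R[X]} (hh : h ≠ 0) (hfg : f ≠ 0 ∨ g ≠ 0) :
    max (h * f).natDegree (h * g).natDegree = h.natDegree + max f.natDegree g.natDegree := by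
  rcases eq_or_ne f 0 with rfl | hf <;> rcases eq_or_ne g 0 with rfl | hg <;>
    simp_all [natDegree_mul hh]

theorem coeff_eq_zero_of_isCoprime {f g Q : R[X]} (hfg : IsCoprime f g)
    (hf : f.natDegree + a ≤ b) (hg : g.natDegree + a ≤ b)
    (hfQ : ∀ r ∈ Set.Ico a b, (f * Q).coeff r = 0)
    (hgQ : ∀ r ∈ Set.Ico a b, (g * Q).coeff r = 0) :
    ∀ r ∈ Set.Ico (a - max f.natDegree g.natDegree) b, Q.coeff r = 0 := by
  obtain ⟨Lf, Hf, hLf, hfsplit⟩ := exists_eq_add_X_pow_mul_of_coeff_eq_zero hfQ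
  obtain ⟨Lg, Hg, hLg, hgsplit⟩ := exists_eq_add_X_pow_mul_of_coeff_eq_zero hgQ
  obtain ⟨u, v, huv⟩ := hfg
  have hcross : g * Lf - f * Lg = X ^ b * (f * Hg - g * Hf) := by
    linear_combination f * hgsplit - g * hfsplit
  have hlow : g * Lf = f * Lg := by
    refine sub_eq_zero.mp (eq_zero_of_dvd_of_degree_lt ⟨_, hcross⟩ ?_)
    rw [degree_X_pow]
    exact (degree_sub_le _ _).trans_lt
      (max_lt (degree_mul_lt_of_degree_lt hLf hg) (degree_mul_lt_of_degree_lt hLg hf))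
  -- Bezout turns the splittings of `f * Q` and `g * Q` at `X ^ b` into one of `Q`.
  set S := u * Lf + v * Lg
  have hQ : Q = S + X ^ b * (u * Hf + v * Hg) := by
    linear_combination (-Q) * huv + u * hfsplit + v * hgsplit
  have hfS : f * S = Lf := by linear_combination v * hlow.symm + Lf * huv
  have hgS : g * S = Lg := by linear_combination u * hlow + Lg * huv
  suffices hS : S.degree < ↑(a - max f.natDegree g.natDegree) by
    rw [hQ]; exact coeff_add_X_pow_mul_eq_zero hS _
  rcases eq_or_ne S 0 with hS0 | hS0
  · simp [hS0]
  rw [← natDegree_lt_iff_degree_lt hS0]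
  have hf' : f ≠ 0 → f.natDegree + S.natDegree < a := fun hf0 =>
    natDegree_add_lt_of_degree_mul_lt hf0 hS0 (hfS ▸ hLf)
  have hg' : g ≠ 0 → g.natDegree + S.natDegree < a := fun hg0 =>
    natDegree_add_lt_of_degree_mul_lt hg0 hS0 (hgS ▸ hLg)
  rcases eq_or_ne f 0 with rfl | hf0 <;> rcases eq_or_ne g 0 with rfl | hg0
  · exact absurd ⟨u, v, huv⟩ not_isCoprime_zero_zero
  all_goals grind

theorem coeff_mul_eq_zero_iff_of_isCoprime {f g Q : R[X]} (hfg : IsCoprime f g)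
    (ha : max f.natDegree g.natDegree ≤ a) (hb : a + max f.natDegree g.natDegree ≤ b) :
    ((∀ r ∈ Set.Ico a b, (f * Q).coeff r = 0) ∧ ∀ r ∈ Set.Ico a b, (g * Q).coeff r = 0) ↔
      ∀ r ∈ Set.Ico (a - max f.natDegree g.natDegree) b, Q.coeff r = 0 := by
  refine ⟨fun h => coeff_eq_zero_of_isCoprime hfg (by omega) (by omega) h.1 h.2, fun h => ?_⟩
  exact ⟨coeff_mul_eq_zero_of_coeff_eq_zero (by omega) h,
    coeff_mul_eq_zero_of_coeff_eq_zero (by omega) h⟩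

end IsDomain

section Field

variable {K : Type*} [Field K]

theorem surjective_mulCoeffWindow_domRestrict {h : K[X]} (hh : h ≠ 0) {w b : ℕ}
    (hw : h.natDegree ≤ w) (hwb : w ≤ b) :
    Function.Surjective ((mulCoeffWindow h w (b - w)).domRestrict (degreeLT K b)) := by
  intro c
  set C : K[X] := X ^ w * ((degreeLTEquiv K (b - w)).symm c : K[X])
  have hC : C.degree < b := degree_mul_lt_of_degree_lt
    (mem_degreeLT.mp ((degreeLTEquiv K (b - w)).symm c).2) (by rw [natDegree_X_pow]; omega)
  refine ⟨⟨C / h, mem_degreeLT.mpr ((degree_div_le _ _).trans_lt hC)⟩, ?_⟩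
  funext i
  have hmod : (C % h).coeff (w + i) = 0 := coeff_eq_zero_of_degree_lt <|
    (degree_mod_lt C hh).trans_le <| degree_le_natDegree.trans (by exact_mod_cast (by omega))
  have hdiv : h * (C / h) = C - C % h := eq_sub_of_add_eq (EuclideanDomain.div_add_mod C h)
  simp only [mulCoeffWindow, LinearMap.domRestrict_apply, LinearMap.pi_apply,
    LinearMap.comp_apply, LinearMap.mulLeft_apply, lcoeff_apply]
  rw [hdiv, coeff_sub, hmod, sub_zero, add_comm, coeff_X_pow_mul]
  exact congrFun ((degreeLTEquiv K (b - w)).apply_symm_apply c) i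

theorem finrank_ker_mulCoeffWindow_domRestrict {h : K[X]} (hh : h ≠ 0) {w b : ℕ}
    (hw : h.natDegree ≤ w) (hwb : w ≤ b) :
    Module.finrank K
      (LinearMap.ker ((mulCoeffWindow h w (b - w)).domRestrict (degreeLT K b))) = w := by
  have := LinearMap.finrank_range_add_finrank_ker
    ((mulCoeffWindow h w (b - w)).domRestrict (degreeLT K b))
  rw [LinearMap.range_eq_top.mpr (surjective_mulCoeffWindow_domRestrict hh hw hwb), finrank_top,
    Module.finrank_fin_fun, (degreeLTEquiv K b).finrank_eq, Module.finrank_fin_fun] at this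
  omega

end Field

end Polynomial

theorem EuclideanDomain.isCoprime_of_eq_gcd_mul_s15 {R : Type*} [EuclideanDomain R] [DecidableEq R]
    {a b a' b' : R} (h0 : gcd a b ≠ 0) (ha : a = gcd a b * a') (hb : b = gcd a b * b') :
    IsCoprime a' b' := by
  refine ⟨gcdA a b, gcdB a b, mul_left_cancel₀ h0 ?_⟩
  linear_combination -gcdA a b * ha - gcdB a b * hb - gcd_eq_gcd_ab a b

namespace Resultant

/-- Column `t` of `Rs n f g` multiplies `X ^ colEquiv n t`: the columns stand for
`X^(2n-1), …, X^n` followed by `X^(n-1), …, X^0`, and row `j` of either block reads the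
coefficient of `X ^ colEquiv n (.inl j)`. -/
def colEquiv (n : ℕ) : Fin n ⊕ Fin n ≃ Fin (n + n) := finSumFinEquiv.trans Fin.revPerm

noncomputable def coeffEquiv (n : ℕ) : (Fin n ⊕ Fin n → ℂ) ≃ₗ[ℂ] degreeLT ℂ (n + n) :=
  LinearEquiv.funCongrLeft ℂ ℂ (colEquiv n).symm ≪≫ₗ (degreeLTEquiv ℂ (n + n)).symm

theorem coe_coeffEquiv (n : ℕ) (v : Fin n ⊕ Fin n → ℂ) :
    (coeffEquiv n v : ℂ[X]) = ∑ t, monomial (colEquiv n t : ℕ) (v t) := by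
  simp only [coeffEquiv, degreeLTEquiv, LinearEquiv.trans_apply, LinearEquiv.coe_symm_mk',
    LinearEquiv.funCongrLeft_apply, LinearMap.funLeft_apply]
  exact Fintype.sum_equiv (colEquiv n).symm _ _ fun i => by simp

theorem forall_colEquiv_inl_iff {n : ℕ} {F : ℕ → Prop} :
    (∀ j : Fin n, F (colEquiv n (.inl j))) ↔ ∀ r ∈ Set.Ico n (n + n), F r := by
  refine ⟨fun H r ⟨hnr, hrn⟩ => ?_, fun H j => H _ ?_⟩
  · simpa [colEquiv, show n + n - (n + n - 1 - r + 1) = r by omega] using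
      H ⟨n + n - 1 - r, by omega⟩
  · simp only [colEquiv, Equiv.trans_apply, finSumFinEquiv_apply_left, Fin.revPerm_apply,
      Fin.val_rev, Fin.val_castAdd, Set.mem_Ico]
    omega

theorem Rv_mul_apply {n : ℕ} (M : Matrix (Fin n) (Fin n) ℂ) (j k : Fin n) :
    (Rv n * M) j k = M j.rev k := by
  have hrev (l : Fin n) : (j : ℕ) + l = n - 1 ↔ l = j.rev := by
    rw [Fin.ext_iff, Fin.val_rev]; omega
  simp [Rv, Matrix.mul_apply, hrev]

theorem row_apply (n : ℕ) (p : ℂ[X]) (j : Fin n) (t : Fin n ⊕ Fin n) :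
    Sum.elim (Tp n p j) ((Rv n * Hk n p) j) t =
      (p * X ^ (colEquiv n t : ℕ)).coeff (colEquiv n (.inl j)) := by
  rcases t with k | k <;>
    simp only [Tp, Hk, Rv_mul_apply, of_apply, Sum.elim_inl, Sum.elim_inr, colEquiv,
      Equiv.trans_apply, finSumFinEquiv_apply_left, finSumFinEquiv_apply_right, Fin.revPerm_apply,
      Fin.natAdd_eq_addNat, Fin.val_addNat, Fin.val_castAdd, Fin.val_rev, coeff_mul_X_pow'] <;>
    split_ifs <;> first | rfl | omega | (congr 1; omega)

theorem toLin'_Rs_apply (n : ℕ) (f g : ℂ[X]) (v : Fin n ⊕ Fin n → ℂ) :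
    toLin' (Rs n f g) v = Sum.elim (fun j => (f * coeffEquiv n v).coeff (colEquiv n (.inl j)))
      (fun j => (g * coeffEquiv n v).coeff (colEquiv n (.inl j))) := by
  have hrow (p : ℂ[X]) (j : Fin n) (M : Matrix (Fin n) (Fin n ⊕ Fin n) ℂ)
      (hM : ∀ t, M j t = Sum.elim (Tp n p j) ((Rv n * Hk n p) j) t) :
      (M *ᵥ v) j = (p * coeffEquiv n v).coeff (colEquiv n (.inl j)) := by
    simp only [mulVec, dotProduct, hM, row_apply, coe_coeffEquiv, coeff_mul_sum_monomial]
  funext s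
  rcases s with j | j
  · exact hrow f j (Rs n f g).toRows₁ fun t => by cases t <;> rfl
  · exact hrow g j (Rs n f g).toRows₂ fun t => by cases t <;> rfl

theorem toLin'_Rs_eq_zero_iff (n : ℕ) (f g : ℂ[X]) (v : Fin n ⊕ Fin n → ℂ) :
    toLin' (Rs n f g) v = 0 ↔
      (∀ r ∈ Set.Ico n (n + n), (f * coeffEquiv n v).coeff r = 0) ∧
        ∀ r ∈ Set.Ico n (n + n), (g * coeffEquiv n v).coeff r = 0 := by
  rw [toLin'_Rs_apply, funext_iff, Sum.forall]
  simp only [Sum.elim_inl, Sum.elim_inr, Pi.zero_apply]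
  exact and_congr (forall_colEquiv_inl_iff (F := ((f * coeffEquiv n v).coeff · = 0)))
    (forall_colEquiv_inl_iff (F := ((g * coeffEquiv n v).coeff · = 0)))

end Resultant

open Resultant in
/-- For `n ≥ m = max(deg f, deg g)`, the nullity of the `2n × 2n` resultant matrix of
`f` and `g` equals `n - m + deg gcd(f, g)`. -/
theorem resultant_nullity_general (f g : ℂ[X]) (hfg : f ≠ 0 ∨ g ≠ 0)
    (m : ℕ) (hm : m = max f.natDegree g.natDegree) (n : ℕ) (hn : m ≤ n) :
    Module.finrank ℂ (LinearMap.ker (Matrix.toLin' (Rs n f g))) =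
      n - m + (EuclideanDomain.gcd f g).natDegree := by
  have hh : EuclideanDomain.gcd f g ≠ 0 := by
    rwa [Ne, EuclideanDomain.gcd_eq_zero_iff, not_and_or]
  obtain ⟨f₁, hf⟩ := EuclideanDomain.gcd_dvd_left f g
  obtain ⟨g₁, hg⟩ := EuclideanDomain.gcd_dvd_right f g
  have hcop : IsCoprime f₁ g₁ := EuclideanDomain.isCoprime_of_eq_gcd_mul_s15 hh hf hg
  generalize EuclideanDomain.gcd f g = h at hh hf hg ⊢
  subst hf hg
  set k := max f₁.natDegree g₁.natDegree
  have hmk : m = h.natDegree + k := hm.trans (max_natDegree_mul_left_s15 hh hcop.ne_zero_or_ne_zero)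
  have hker : LinearMap.ker (toLin' (Rs n (h * f₁) (h * g₁))) = (LinearMap.ker
      ((mulCoeffWindow h (n - k) (n + n - (n - k))).domRestrict (degreeLT ℂ (n + n)))).comap
        (coeffEquiv n).toLinearMap := by
    ext v
    rw [Submodule.mem_comap, LinearMap.mem_ker, LinearMap.mem_ker, toLin'_Rs_eq_zero_iff,
      LinearMap.domRestrict_apply, mulCoeffWindow_eq_zero_iff,
      ← coeff_mul_eq_zero_iff_of_isCoprime hcop (by omega) (by omega)]
    simp only [LinearEquiv.coe_coe, mul_assoc, mul_left_comm h]
  rw [hker, Submodule.comap_equiv_eq_map_symm, LinearEquiv.finrank_map_eq,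
    finrank_ker_mulCoeffWindow_domRestrict hh (by omega) (by omega)]
  omega
end
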